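/- arXiv:2012.04806 — 5 statements merged into one kernel-verified Lean document; each statement's English description precedes it below -/
import Mathlib

section
/- Let G be a finite group, H ≤ G a subgroup, g ∈ G, and let T ⊆ G be the conjugacy class of g. Then the number of fixed points of g acting on the coset space G/H (by left translation) equals |G| · |T ∩ H| / (|H| · |T|). -/
/-!
Both sides count the elements `x : G` with `x⁻¹ * g * x ∈ H`, in two ways. These are exactly the
`x` whose coset `xH` is fixed by `g`, so there are `|H|` of them per fixed point. On the other hand
`x ↦ x⁻¹ * g * x` maps `G` onto `T` with fibres the cosets of the centralizer `C` of `g`, so there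
are `|C|` of them per element of `T ∩ H`; and `|G| = |C| · |T|` by orbit-stabilizer.
-/

open MulAction

theorem MulAction.card_setOf_smul_mem {G X : Type*} [Group G] [MulAction G X] (a : X) (S : Set X) :
    Nat.card {x : G | x • a ∈ S} = Nat.card (stabilizer G a) * Nat.card (orbit G a ∩ S : Set X) := by
  let s : Set (G ⧸ stabilizer G a) := {q | ofQuotientStabilizer G a q ∈ S}
  calc Nat.card {x : G | x • a ∈ S}
      = Nat.card (QuotientGroup.mk ⁻¹' s) := rfl
    _ = Nat.card (stabilizer G a) * Nat.card s := by
      rw [Nat.card_congr (QuotientGroup.preimageMkEquivSubgroupProdSet _ s), Nat.card_prod]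
    _ = Nat.card (stabilizer G a) * Nat.card (orbit G a ∩ S : Set X) := by
      congr 1
      exact Nat.card_congr <| ((orbitEquivQuotientStabilizer G a).symm.subtypeEquiv
        fun _ => Iff.rfl).trans (Equiv.subtypeSubtypeEquivSubtypeInter _ (· ∈ S))

theorem QuotientGroup.card_mul_card_fixedBy {G : Type*} [Group G] (H : Subgroup G) (g : G) :
    Nat.card H * Nat.card (fixedBy (G ⧸ H) g) = Nat.card {x : G | x⁻¹ * g * x ∈ H} := by
  have hpre : QuotientGroup.mk ⁻¹' fixedBy (G ⧸ H) g = {x : G | x⁻¹ * g * x ∈ H} := by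
    ext x
    change ((g * x : G) : G ⧸ H) = x ↔ _
    rw [QuotientGroup.eq, ← H.inv_mem_iff]
    simp [mul_assoc]
  rw [← hpre, Nat.card_congr (QuotientGroup.preimageMkEquivSubgroupProdSet H _), Nat.card_prod]

theorem stmt_1_general (G : Type) [Group G] (H : Subgroup G) (g : G)
    (T : Set G) (hT : T = {x : G | ∃ y : G, y * g * y⁻¹ = x}) :
    Nat.card (MulAction.fixedBy (G ⧸ H) g) * (Nat.card H * Nat.card T) =
      Nat.card G * Nat.card (T ∩ (H : Set G) : Set G) := by
  have hT_orbit : T = orbit (ConjAct G) g := by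
    ext x
    rw [hT, Set.mem_ofPred_eq, ConjAct.mem_orbit_conjAct, isConj_comm, isConj_iff]
  have hconj :
      Nat.card {x : G | x⁻¹ * g * x ∈ H} = Nat.card {c : ConjAct G | c • g ∈ (H : Set G)} :=
    Nat.card_congr <| (Equiv.inv G).trans ConjAct.toConjAct.toEquiv |>.subtypeEquiv fun x => by
      change x⁻¹ * g * x ∈ H ↔ ConjAct.toConjAct x⁻¹ • g ∈ H
      rw [ConjAct.toConjAct_inv_smul]
  have horbit_stab : Nat.card (stabilizer (ConjAct G) g) * Nat.card T = Nat.card G := by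
    rw [hT_orbit, Nat.card_coe_set_eq, ← index_stabilizer, Subgroup.card_mul_index]
    rfl
  calc Nat.card (fixedBy (G ⧸ H) g) * (Nat.card H * Nat.card T)
      = Nat.card (stabilizer (ConjAct G) g) * Nat.card (T ∩ (H : Set G) : Set G) * Nat.card T := by
        rw [← mul_assoc, mul_comm (Nat.card _) (Nat.card H), QuotientGroup.card_mul_card_fixedBy,
          hconj, card_setOf_smul_mem, hT_orbit]
    _ = Nat.card G * Nat.card (T ∩ (H : Set G) : Set G) := by
        rw [← horbit_stab]; ring

/-- Fixed points of g on G/H number |G|·|T∩H|/(|H|·|T|), where T is the conjugacy class of g. -/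
theorem stmt_1 (G : Type) [Group G] [Fintype G] (H : Subgroup G) (g : G)
    (T : Set G) (hT : T = {x : G | ∃ y : G, y * g * y⁻¹ = x}) :
    Nat.card (MulAction.fixedBy (G ⧸ H) g) * (Nat.card H * Nat.card T) =
      Nat.card G * Nat.card (T ∩ (H : Set G) : Set G) :=
  stmt_1_general G H g T hT
end

section
/- Let G be a finite cyclic group and let A, B be finite G-sets such that every g ∈ G has the same number of fixed points on A as on B. Then A and B are isomorphic as G-sets, i.e., there is a G-equivariant bijection A → B. -/
/-!
Let `g` generate `G`. The number of fixed points of `g ^ k` on `A` is the sum of the lengths of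
the `g`-cycles on `A` whose length divides `k`; by Möbius inversion these sums for all `k` recover
the multiset of cycle lengths. So `g` has the same cycle type on `A` as on `B`, and a bijection
matching the cycles intertwines the action of `g`, hence of all of `G = ⟨g⟩`.
-/

open Equiv Function Finset

namespace Multiset

theorem sum_filter_dvd_eq_sum_divisors (M : Multiset ℕ) {k : ℕ} (hk : k ≠ 0) :
    (M.filter (· ∣ k)).sum = ∑ d ∈ k.divisors, M.count d * d := by
  rw [Finset.sum_multiset_count_of_subset _ k.divisors]
  · refine Finset.sum_congr rfl fun d hd => ?_
    rw [count_filter_of_pos (p := (· ∣ k)) (Nat.dvd_of_mem_divisors hd), smul_eq_mul]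
  · intro d hd
    rw [mem_toFinset, mem_filter] at hd
    exact Nat.mem_divisors.mpr ⟨hd.2, hk⟩

theorem eq_of_sum_filter_dvd_eq {M N : Multiset ℕ} (hM : 0 ∉ M) (hN : 0 ∉ N)
    (h : ∀ k ≠ 0, (M.filter (· ∣ k)).sum = (N.filter (· ∣ k)).sum) : M = N := by
  set f : ℕ → ℤ := fun d => (M.count d * d : ℕ) - (N.count d * d : ℕ)
  have hf : ∀ n > 0, ∑ i ∈ n.divisors, f i = 0 := fun n hn => by
    simp only [f, Finset.sum_sub_distrib, ← Nat.cast_sum,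
      ← sum_filter_dvd_eq_sum_divisors _ hn.ne', h n hn.ne', sub_self]
  ext d
  rcases Nat.eq_zero_or_pos d with rfl | hd
  · rw [count_eq_zero.mpr hM, count_eq_zero.mpr hN]
  · have := ArithmeticFunction.sum_eq_iff_sum_smul_moebius_eq.mp hf d hd
    simp only [smul_zero, Finset.sum_const_zero, f] at this
    exact Nat.eq_of_mul_eq_mul_right hd (by omega)

end Multiset

namespace Equiv.Perm

theorem card_fixedPoints_permCongr {α β : Type*} (e : α ≃ β) (σ : Perm α) :
    Nat.card (fixedPoints ⇑(e.permCongr σ)) = Nat.card (fixedPoints ⇑σ) :=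
  (Nat.card_congr (e.subtypeEquiv fun a => by simp [IsFixedPt])).symm

section

variable {α : Type*} [Fintype α] [DecidableEq α]

theorem card_support_pow (σ : Perm α) (k : ℕ) :
    #(σ ^ k).support = (σ.cycleType.filter (¬ · ∣ k)).sum := by
  induction σ using cycle_induction_on with
  | base_one => simp
  | base_cycles c hc =>
    rw [hc.cycleType]
    by_cases hd : #c.support ∣ k
    · have h1 : c ^ k = 1 := orderOf_dvd_iff_pow_eq_one.mp (hc.orderOf ▸ hd)
      simp [h1, hd, Multiset.filter_singleton]
    · rw [(hc.support_pow_eq_iff).2 (by rwa [hc.orderOf])]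
      simp [hd, Multiset.filter_singleton]
  | induction_disjoint σ τ hdis _ hσ hτ =>
    rw [hdis.commute.mul_pow, (hdis.pow_disjoint_pow k k).card_support_mul, hdis.cycleType_mul,
      Multiset.filter_add, Multiset.sum_add, hσ, hτ]

theorem card_fixedPoints_pow (σ : Perm α) (k : ℕ) :
    Nat.card (fixedPoints ⇑(σ ^ k)) = (σ.partition.parts.filter (· ∣ k)).sum := by
  have hsum := σ.partition.parts_sum
  rw [← Multiset.filter_add_not (· ∣ k) σ.partition.parts, Multiset.sum_add] at hsum
  have hnot : σ.partition.parts.filter (¬ · ∣ k) = σ.cycleType.filter (¬ · ∣ k) := by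
    rw [parts_partition, Multiset.filter_add, add_eq_left, Multiset.filter_eq_nil]
    intro a ha
    rw [Multiset.eq_of_mem_replicate ha, not_not]
    exact one_dvd k
  rw [Nat.card_eq_fintype_card, card_fixedPoints, sum_cycleType, card_support_pow, ← hnot]
  omega

theorem isConj_of_card_fixedPoints_pow_eq {σ τ : Perm α}
    (h : ∀ k, Nat.card (fixedPoints ⇑(σ ^ k)) = Nat.card (fixedPoints ⇑(τ ^ k))) :
    IsConj σ τ := by
  rw [partition_eq_of_isConj, Nat.Partition.ext_iff]
  refine Multiset.eq_of_sum_filter_dvd_eq (fun h0 => ?_) (fun h0 => ?_) fun k _ => ?_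
  · exact (σ.partition.parts_pos h0).ne rfl
  · exact (τ.partition.parts_pos h0).ne rfl
  · rw [← card_fixedPoints_pow, ← card_fixedPoints_pow, h]

end

theorem exists_equiv_semiconj_of_card_fixedPoints_pow_eq {α β : Type*} [Finite α] [Finite β]
    (σ : Perm α) (τ : Perm β)
    (h : ∀ k, Nat.card (fixedPoints ⇑(σ ^ k)) = Nat.card (fixedPoints ⇑(τ ^ k))) :
    ∃ e : α ≃ β, ∀ a, e (σ a) = τ (e a) := by
  classical
  have := Fintype.ofFinite α
  obtain ⟨e₀⟩ : Nonempty (α ≃ β) := Finite.card_eq.mp (by simpa using h 0)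
  obtain ⟨c, hc⟩ := isConj_iff.mp <| isConj_of_card_fixedPoints_pow_eq (σ := σ)
    (τ := e₀.symm.permCongr τ) fun k => by
      rw [h, ← permCongrHom_coe, ← map_pow, permCongrHom_coe, card_fixedPoints_permCongr]
  refine ⟨c.trans e₀, fun a => ?_⟩
  simpa [Perm.mul_apply, eq_symm_apply] using congr($hc (c a))

end Equiv.Perm

theorem Equiv.map_smul_of_zpowers_eq_top {G A B : Type*} [Group G] [MulAction G A]
    [MulAction G B] (e : A ≃ B) {g : G} (hg : Subgroup.zpowers g = ⊤)
    (he : ∀ a, e (g • a) = g • e a) (x : G) (a : A) : e (x • a) = x • e a := by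
  have hom : e.permCongrHom.toMonoidHom.comp (MulAction.toPermHom G A) =
      MulAction.toPermHom G B := by
    refine MonoidHom.eq_of_eqOn_dense (s := {g}) (by rw [← Subgroup.zpowers_eq_closure, hg]) ?_
    rintro _ rfl
    ext b
    simp [he]
  simpa using congr($hom x (e a))

theorem stmt_5_general (G : Type) [Group G] [IsCyclic G]
    (A B : Type) [Fintype A] [Fintype B] [MulAction G A] [MulAction G B]
    (h : ∀ g : G, Nat.card (MulAction.fixedBy A g) = Nat.card (MulAction.fixedBy B g)) :
    ∃ e : A ≃ B, ∀ (g : G) (a : A), e (g • a) = g • e a := by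
  obtain ⟨g, hg⟩ := isCyclic_iff_exists_zpowers_eq_top.mp ‹IsCyclic G›
  obtain ⟨e, he⟩ := Perm.exists_equiv_semiconj_of_card_fixedPoints_pow_eq
    (MulAction.toPerm g : Perm A) (MulAction.toPerm g : Perm B) fun k => by
      simp only [← MulAction.coe_toPermHom, ← map_pow]
      exact h (g ^ k)
  exact ⟨e, e.map_smul_of_zpowers_eq_top hg he⟩

/-- Gassmann equivalent finite G-sets over a finite cyclic group are isomorphic. -/
theorem stmt_5 (G : Type) [Group G] [Fintype G] [IsCyclic G]
    (A B : Type) [Fintype A] [Fintype B] [MulAction G A] [MulAction G B]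
    (h : ∀ g : G, Nat.card (MulAction.fixedBy A g) = Nat.card (MulAction.fixedBy B g)) :
    ∃ e : A ≃ B, ∀ (g : G) (a : A), e (g • a) = g • e a :=
  stmt_5_general G A B h
end

section
/- Let G be a finite group, H a normal subgroup of G and H' an arbitrary subgroup of G. If for every g ∈ G the number of fixed points of g on G/H equals the number of fixed points of g on G/H', then H' = H. In particular the G-sets G/H and G/H' are isomorphic. -/
/-!
For normal `H`, every point of `G ⧸ H` has stabilizer `H`, so `g` has a fixed point on `G ⧸ H`
iff `g ∈ H`. An element of `H'` fixes the coset `H'` in `G ⧸ H'`, hence by the fixed-point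
count also some point of `G ⧸ H`, so `H' ≤ H`. Comparing the counts at `g = 1` gives
`[G : H] = [G : H']`, so the inclusion is an equality.
-/

namespace QuotientGroup

open MulAction

variable {G : Type*} [Group G]

theorem one_mem_fixedBy_iff (K : Subgroup G) (g : G) :
    ((1 : G) : G ⧸ K) ∈ fixedBy (G ⧸ K) g ↔ g ∈ K := by
  rw [mem_fixedBy, ← mem_stabilizer_iff, stabilizer_quotient]

theorem fixedBy_nonempty_iff_of_normal (H : Subgroup G) [H.Normal] (g : G) :
    (fixedBy (G ⧸ H) g).Nonempty ↔ g ∈ H := by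
  refine ⟨?_, fun hg => ⟨_, (one_mem_fixedBy_iff H g).2 hg⟩⟩
  rintro ⟨x, hx⟩
  obtain ⟨a, rfl⟩ := mk_surjective x
  have hconj : a⁻¹ * g⁻¹ * a ∈ H := by
    simpa [mul_assoc] using QuotientGroup.eq.1 (show ((g * a : G) : G ⧸ H) = a from hx)
  simpa [mul_assoc] using H.inv_mem (‹H.Normal›.conj_mem _ hconj a)

theorem le_of_card_fixedBy_le [Finite G] {H K : Subgroup G} [H.Normal]
    (h : ∀ g : G, Nat.card (fixedBy (G ⧸ K) g) ≤ Nat.card (fixedBy (G ⧸ H) g)) : K ≤ H := by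
  intro g hg
  have hK : 0 < Nat.card (fixedBy (G ⧸ K) g) :=
    Nat.card_pos_iff.2 ⟨⟨⟨_, (one_mem_fixedBy_iff K g).2 hg⟩⟩, inferInstance⟩
  obtain ⟨⟨x, hx⟩, -⟩ := Nat.card_pos_iff.1 (hK.trans_le (h g))
  exact (fixedBy_nonempty_iff_of_normal H g).1 ⟨x, hx⟩

end QuotientGroup

theorem Subgroup.index_eq_of_card_fixedBy_one_eq {G : Type*} [Group G] {H K : Subgroup G}
    (h : Nat.card (MulAction.fixedBy (G ⧸ H) (1 : G)) =
      Nat.card (MulAction.fixedBy (G ⧸ K) (1 : G))) :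
    H.index = K.index := by
  rwa [MulAction.fixedBy_one_eq_univ, MulAction.fixedBy_one_eq_univ, Nat.card_univ,
    Nat.card_univ] at h

theorem Subgroup.eq_of_le_of_index_eq {G : Type*} [Group G] {H K : Subgroup G} [K.FiniteIndex]
    (hle : K ≤ H) (hidx : H.index = K.index) : K = H :=
  hle.eq_or_lt.resolve_right fun hlt => (Subgroup.index_strictAnti hlt).ne hidx

/-- If H is normal and G/H, G/H' are Gassmann equivalent, then H' = H
(and in particular G/H and G/H' are isomorphic G-sets). -/
theorem stmt_6 (G : Type) [Group G] [Fintype G] (H H' : Subgroup G) [H.Normal]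
    (h : ∀ g : G,
      Nat.card (MulAction.fixedBy (G ⧸ H) g) = Nat.card (MulAction.fixedBy (G ⧸ H') g)) :
    H' = H ∧ ∃ e : (G ⧸ H) ≃ (G ⧸ H'), ∀ (g : G) (x : G ⧸ H), e (g • x) = g • e x := by
  have hle : H' ≤ H := QuotientGroup.le_of_card_fixedBy_le fun g => (h g).ge
  have heq : H' = H :=
    Subgroup.eq_of_le_of_index_eq hle (Subgroup.index_eq_of_card_fixedBy_one_eq (h 1))
  subst heq
  exact ⟨rfl, Equiv.refl _, fun _ _ => rfl⟩
end

section
/- Let G be a finite group and let A, B be finite G-sets of cardinality at most 5 such that for every g ∈ G the number of fixed points of g on A equals the number of fixed points of g on B. Then A and B are isomorphic as G-sets. -/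
/-!
Induct on `|A|`. Take a point `x` of `A`, say, whose orbit is smallest among all orbits of `A`
and `B`, and let `H` be its stabilizer. As `H`-sets, `A` and `B` are still Gassmann equivalent
and `A` has the `H`-fixed point `x`; by the key lemma, `B` has an `H`-fixed point `y`, and
minimality of the orbit of `x` forces `stabilizer y = H`. So the orbits of `x` and `y` are
isomorphic, and their complements are Gassmann equivalent G-sets of smaller size.

Key lemma: if `|A| ≤ 5` and `A` has a fixed point, so does `B`. Otherwise Burnside's lemma
gives `A` and `B` equally many orbits, which forces `A = pt ⊔ T` and `B = U ⊔ V` with `T, U, V`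
transitive, `|T| ∈ {3, 4}`, `|U|, |V| ≥ 2` and `fix T + 1 = fix U + fix V`. If `|T| = 3`, then
`|U| = |V| = 2`, so `fix U + fix V` is even and every element fixes a point of `T`, contradicting
Jordan's theorem. If `|T| = 4`, say `|U| = 2` and `|V| = 3`: the kernel `N` of the action on `U`
has index 2 and every element outside `N` fixes a point of `V`, which makes `N` transitive on
`V`. Burnside's lemma then gives `N` two orbits on `T`; they are blocks, hence of size 2, so
elements of `N` fix an even number of points of `T`, whereas a derangement of `V` in `N` fixes
exactly one.
-/

open MulAction

def IsGassmannEquiv (G A B : Type*) [Group G] [MulAction G A] [MulAction G B] : Prop :=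
  ∀ g : G, Nat.card (fixedBy A g) = Nat.card (fixedBy B g)

section FixedPoints

variable {G X : Type*} [Group G] [MulAction G X]

theorem card_fixedBy_one : Nat.card (fixedBy X (1 : G)) = Nat.card X := by
  rw [fixedBy_one_eq_univ, Nat.card_univ]

theorem card_fixedBy_le [Finite X] (g : G) : Nat.card (fixedBy X g) ≤ Nat.card X :=
  Finite.card_subtype_le _

theorem card_fixedBy_add_one_ne [Finite X] (g : G) :
    Nat.card (fixedBy X g) + 1 ≠ Nat.card X := by
  intro h
  rw [Nat.card_coe_set_eq, ← Set.ncard_add_ncard_compl (fixedBy X g), add_right_inj,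
    eq_comm, Set.ncard_eq_one] at h
  obtain ⟨y, hy⟩ := h
  have hy' : y ∉ fixedBy X g := by rw [← Set.mem_compl_iff, hy]; rfl
  -- the unique moved point `y` would have to be sent to another moved point
  have : g • y ∈ ({y} : Set X) := by
    rw [← hy, Set.mem_compl_iff, smul_mem_fixedBy_iff_mem_fixedBy]; exact hy'
  exact hy' this

theorem card_fixedBy_eq_zero_or_two [Finite X] (hX : Nat.card X = 2) (g : G) :
    Nat.card (fixedBy X g) = 0 ∨ Nat.card (fixedBy X g) = 2 := by
  have := card_fixedBy_le (X := X) g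
  have := card_fixedBy_add_one_ne (X := X) g
  omega

theorem smul_eq_of_card_fixedBy_eq [Finite X] {g : G}
    (h : Nat.card (fixedBy X g) = Nat.card X) (x : X) : g • x = x := by
  by_contra hx
  have := Set.ncard_lt_card (s := fixedBy X g) fun huniv =>
    hx (show x ∈ fixedBy X g from huniv ▸ Set.mem_univ x)
  rw [Nat.card_coe_set_eq] at h
  omega

theorem card_fixedBy_congr {Y : Type*} [MulAction G Y] (e : X ≃ Y)
    (he : ∀ (g : G) x, e (g • x) = g • e x) (g : G) :
    Nat.card (fixedBy X g) = Nat.card (fixedBy Y g) :=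
  Nat.card_congr <| e.subtypeEquiv fun x => by
    simp only [mem_fixedBy, ← he, e.apply_eq_iff_eq]

theorem card_fixedBy_subMulAction (p : SubMulAction G X) (g : G) :
    Nat.card (fixedBy p g) = (fixedBy X g ∩ p).ncard := by
  rw [Nat.card_coe_set_eq, ← Set.ncard_image_of_injective _ Subtype.val_injective]
  congr 1
  ext x
  simp [Subtype.ext_iff]

theorem card_fixedBy_eq_add_compl [Finite X] (p : SubMulAction G X) (g : G) :
    Nat.card (fixedBy X g) = Nat.card (fixedBy p g) + Nat.card (fixedBy ↥pᶜ g) := by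
  rw [card_fixedBy_subMulAction, card_fixedBy_subMulAction, Nat.card_coe_set_eq]
  exact (Set.ncard_inter_add_ncard_sdiff_eq_ncard _ _).symm

end FixedPoints

section Orbits

variable {G X : Type*} [Group G] [MulAction G X]

theorem sum_card_fixedBy [Fintype G] [Finite X] :
    ∑ g : G, Nat.card (fixedBy X g) = Nat.card (orbitRel.Quotient G X) * Nat.card G := by
  classical
  have := Fintype.ofFinite X
  have := Fintype.ofFinite (orbitRel.Quotient G X)
  simp only [Nat.card_eq_fintype_card]
  exact sum_card_fixedBy_eq_card_orbits_mul_card_group G X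

theorem card_fixedBy_eq_sum_orbit [Finite X] [Fintype (orbitRel.Quotient G X)] (g : G) :
    Nat.card (fixedBy X g) = ∑ ω : orbitRel.Quotient G X, Nat.card (fixedBy ω.orbit g) := by
  classical
  have := Fintype.ofFinite X
  rw [Nat.card_coe_set_eq, Set.ncard_eq_toFinset_card',
    Finset.card_eq_sum_card_fiberwise (f := fun x => (Quotient.mk'' x : orbitRel.Quotient G X))
      (t := Finset.univ) fun _ _ => Finset.mem_univ _]
  refine Finset.sum_congr rfl fun ω _ => Eq.symm ?_
  refine (card_fixedBy_subMulAction
    ⟨orbitRel.Quotient.orbit ω, fun g _ h => orbitRel.Quotient.mapsTo_smul_orbit g ω h⟩ g).trans ?_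
  rw [Set.ncard_eq_toFinset_card']
  congr 1
  ext x
  simp only [Set.mem_toFinset, Finset.mem_filter, Set.mem_inter_iff, SetLike.mem_coe]
  exact and_congr_right fun _ => orbitRel.Quotient.mem_orbit

theorem card_eq_sum_card_orbit [Finite X] [Fintype (orbitRel.Quotient G X)] :
    Nat.card X = ∑ ω : orbitRel.Quotient G X, Nat.card ω.orbit := by
  simpa only [card_fixedBy_one] using card_fixedBy_eq_sum_orbit (X := X) (1 : G)

theorem exists_card_fixedBy_eq_add_of_card_orbits_eq_two [Finite X]
    (h : Nat.card (orbitRel.Quotient G X) = 2) (ω₀ : orbitRel.Quotient G X) :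
    ∃ ω, ω ≠ ω₀ ∧ ∀ g : G,
      Nat.card (fixedBy X g) = Nat.card (fixedBy ω₀.orbit g) + Nat.card (fixedBy ω.orbit g) := by
  classical
  have := Fintype.ofFinite (orbitRel.Quotient G X)
  obtain ⟨ω, hω, huniq⟩ := (Nat.card_eq_two_iff' ω₀).mp h
  refine ⟨ω, hω, fun g => ?_⟩
  rw [card_fixedBy_eq_sum_orbit,
    Fintype.sum_eq_add ω₀ ω hω.symm fun x hx => absurd (huniq x hx.1) hx.2]

theorem one_lt_card_orbit [Finite X] (h : ∀ x : X, ∃ g : G, g • x ≠ x)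
    (ω : orbitRel.Quotient G X) : 1 < Nat.card ω.orbit := by
  obtain ⟨g, hg⟩ := h ω.out
  rw [Nat.card_coe_set_eq, orbitRel.Quotient.orbit_eq_orbit_out ω Quotient.out_eq']
  exact (Set.one_lt_ncard).mpr ⟨_, mem_orbit _ g, _, mem_orbit_self _, hg⟩

theorem two_mul_card_orbits_le [Finite X] (h : ∀ x : X, ∃ g : G, g • x ≠ x) :
    2 * Nat.card (orbitRel.Quotient G X) ≤ Nat.card X := by
  classical
  have := Fintype.ofFinite (orbitRel.Quotient G X)
  rw [card_eq_sum_card_orbit (G := G) (X := X), Nat.card_eq_fintype_card, mul_comm,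
    ← smul_eq_mul, ← Finset.card_univ, ← Finset.sum_const]
  exact Finset.sum_le_sum fun ω _ => one_lt_card_orbit h ω

theorem card_orbit_eq_one {x : X} (hx : ∀ g : G, g • x = x) : Nat.card (orbit G x) = 1 := by
  rw [Nat.card_coe_set_eq, Set.ncard_eq_one]
  exact ⟨x, Set.ext fun y => by simp [mem_orbit_iff, hx, eq_comm]⟩

theorem card_orbits_eq_one [Nonempty X] [IsPretransitive G X] :
    Nat.card (orbitRel.Quotient G X) = 1 :=
  have := (pretransitive_iff_subsingleton_quotient G X).mp ‹_›
  have : Nonempty (orbitRel.Quotient G X) := ⟨Quotient.mk'' (Classical.arbitrary X)⟩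
  Nat.card_unique

theorem isPretransitive_subgroup_of_card_fixedBy_ne_zero [Finite G] [Finite X]
    [IsPretransitive G X] (N : Subgroup G) (h : ∀ g ∉ N, Nat.card (fixedBy X g) ≠ 0) :
    IsPretransitive N X := by
  classical
  have := Fintype.ofFinite G
  have split (φ : G → ℕ) :
      ∑ g, φ g = ∑ n : N, φ n + ∑ g ∈ Finset.univ.filter (· ∉ N), φ g := by
    rw [← Finset.sum_filter_add_sum_filter_not _ (· ∈ N),
      Finset.sum_subtype (p := (· ∈ N)) _ fun g => by simp]
  have hG : Nat.card (orbitRel.Quotient G X) ≤ 1 :=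
    Finite.card_le_one_iff_subsingleton.mpr ((pretransitive_iff_subsingleton_quotient G X).mp ‹_›)
  have hsumG := sum_card_fixedBy (G := G) (X := X)
  have hsumN : ∑ n : N, Nat.card (fixedBy X (n : G)) =
      Nat.card (orbitRel.Quotient N X) * Nat.card N := sum_card_fixedBy
  have hcard := split fun _ => 1
  simp only [Finset.sum_const, Finset.card_univ, smul_eq_mul, mul_one,
    ← Nat.card_eq_fintype_card] at hcard
  rw [split] at hsumG
  have hout : ∑ g ∈ Finset.univ.filter (· ∉ N), 1 ≤
      ∑ g ∈ Finset.univ.filter (· ∉ N), Nat.card (fixedBy X g) :=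
    Finset.sum_le_sum fun g hg => Nat.one_le_iff_ne_zero.mpr (h g (Finset.mem_filter.mp hg).2)
  simp only [Finset.sum_const, smul_eq_mul, mul_one] at hout
  have := Nat.mul_le_mul_right (Nat.card G) hG
  -- Burnside for `N` and `G`: `#(N-orbits) * |N| + |G \ N| ≤ #(G-orbits) * |G| ≤ |N| + |G \ N|`
  have : Nat.card (orbitRel.Quotient N X) * Nat.card N ≤ 1 * Nat.card N := by
    linarith
  exact (pretransitive_iff_subsingleton_quotient N X).mpr
    (Finite.card_le_one_iff_subsingleton.mp (Nat.le_of_mul_le_mul_right this Nat.card_pos))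

theorem exists_card_fixedBy_eq_zero [Finite G] [Finite X] [IsPretransitive G X]
    (hX : 1 < Nat.card X) : ∃ g : G, Nat.card (fixedBy X g) = 0 := by
  by_contra! h
  have := isPretransitive_subgroup_of_card_fixedBy_ne_zero (X := X) ⊥ fun g _ => h g
  obtain ⟨x, y, hxy⟩ := (Finite.one_lt_card_iff_nontrivial.mp hX).exists_pair_ne
  obtain ⟨n, hn⟩ := exists_smul_eq (⊥ : Subgroup G) x y
  rw [Subsingleton.elim n 1, one_smul] at hn
  exact hxy hn

end Orbits

namespace SubMulAction

variable (G : Type*) {X : Type*} [Group G] [MulAction G X]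

def orbit (x : X) : SubMulAction G X where
  carrier := MulAction.orbit G x
  smul_mem' g _ hy := mapsTo_smul_orbit g x hy

end SubMulAction

namespace IsGassmannEquiv

variable {G A B : Type*} [Group G] [MulAction G A] [MulAction G B]

theorem symm (h : IsGassmannEquiv G A B) : IsGassmannEquiv G B A :=
  fun g => (h g).symm

theorem card_eq (h : IsGassmannEquiv G A B) : Nat.card A = Nat.card B := by
  simpa only [card_fixedBy_one] using h 1

theorem subgroup (h : IsGassmannEquiv G A B) (H : Subgroup G) : IsGassmannEquiv H A B :=
  fun g => h g

theorem card_orbits_eq [Finite G] [Finite A] [Finite B] (h : IsGassmannEquiv G A B) :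
    Nat.card (orbitRel.Quotient G A) = Nat.card (orbitRel.Quotient G B) := by
  have := Fintype.ofFinite G
  refine Nat.eq_of_mul_eq_mul_right (Nat.card_pos (α := G)) ?_
  rw [← sum_card_fixedBy, ← sum_card_fixedBy]
  exact Finset.sum_congr rfl fun g _ => h g

theorem compl [Finite A] [Finite B] (h : IsGassmannEquiv G A B) {p : SubMulAction G A}
    {q : SubMulAction G B} (e : p ≃ q) (he : ∀ (g : G) x, e (g • x) = g • e x) :
    IsGassmannEquiv G ↥pᶜ ↥qᶜ := fun g => by
  have := h g
  rw [card_fixedBy_eq_add_compl p, card_fixedBy_eq_add_compl q, card_fixedBy_congr e he] at this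
  omega

end IsGassmannEquiv

section SmallRelations

variable {G T U V : Type*} [Group G] [MulAction G T] [MulAction G U] [MulAction G V]
  [Finite T] [Finite U] [Finite V]

theorem card_fixedBy_eq_two_iff (hU : Nat.card U = 2) (u : U) (g : G) :
    Nat.card (fixedBy U g) = 2 ↔ g ∈ stabilizer G u := by
  refine ⟨fun h => smul_eq_of_card_fixedBy_eq (hU ▸ h) u, fun hg => ?_⟩
  have : Nonempty (fixedBy U g) := ⟨⟨u, hg⟩⟩
  have := Nat.card_pos (α := fixedBy U g)
  have := card_fixedBy_eq_zero_or_two hU g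
  omega

theorem card_fixedBy_ne_one_of_normal [IsPretransitive G T] (hT : Nat.card T = 4)
    (N : Subgroup G) [N.Normal] (hN : Nat.card (orbitRel.Quotient N T) = 2) (n : N) :
    Nat.card (fixedBy T n) ≠ 1 := by
  -- the two `N`-orbits are blocks of the transitive `G`-set `T`, so both have size 2
  have hdvd (ω : orbitRel.Quotient N T) : Nat.card ω.orbit ∣ 4 := by
    rw [← hT, Nat.card_coe_set_eq, orbitRel.Quotient.orbit_eq_orbit_out ω Quotient.out_eq']
    exact (IsBlock.orbit_of_normal _).ncard_dvd_card ⟨_, mem_orbit_self _⟩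
  have : Nonempty T := Nat.card_pos_iff.mp (by omega) |>.1
  obtain ⟨ω₁, -, hsplit⟩ :=
    exists_card_fixedBy_eq_add_of_card_orbits_eq_two hN (Quotient.mk'' (Classical.arbitrary T))
  set ω₀ : orbitRel.Quotient N T := Quotient.mk'' (Classical.arbitrary T)
  have hsum := hsplit 1
  simp only [card_fixedBy_one, hT] at hsum
  have h₀ : Nat.card ω₀.orbit = 2 := by
    have h₁ := hdvd ω₁
    rw [show Nat.card ω₁.orbit = 4 - Nat.card ω₀.orbit by omega] at h₁
    have := hdvd ω₀
    have : Nat.card ω₀.orbit ≤ 4 := by omega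
    interval_cases Nat.card ω₀.orbit <;> omega
  rw [hsplit n]
  rcases card_fixedBy_eq_zero_or_two h₀ n with h | h <;>
    rcases card_fixedBy_eq_zero_or_two (show Nat.card ω₁.orbit = 2 by omega) n with h' | h' <;>
    omega

theorem not_forall_card_fixedBy_add_one_eq_three_two_two [Finite G] [IsPretransitive G T]
    (hT : Nat.card T = 3) (hU : Nat.card U = 2) (hV : Nat.card V = 2) :
    ¬ ∀ g : G, Nat.card (fixedBy T g) + 1 = Nat.card (fixedBy U g) + Nat.card (fixedBy V g) := by
  intro h
  obtain ⟨g, hg⟩ := exists_card_fixedBy_eq_zero (G := G) (X := T) (by omega)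
  have := h g
  rcases card_fixedBy_eq_zero_or_two hU g with hu | hu <;>
    rcases card_fixedBy_eq_zero_or_two hV g with hv | hv <;> omega

theorem not_forall_card_fixedBy_add_one_eq_four_two_three [Finite G] [IsPretransitive G T]
    [IsPretransitive G U] [IsPretransitive G V]
    (hT : Nat.card T = 4) (hU : Nat.card U = 2) (hV : Nat.card V = 3) :
    ¬ ∀ g : G, Nat.card (fixedBy T g) + 1 = Nat.card (fixedBy U g) + Nat.card (fixedBy V g) := by
  classical
  have := Fintype.ofFinite G
  intro h
  obtain ⟨u⟩ : Nonempty U := Nat.card_pos_iff.mp (by omega) |>.1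
  have : Nonempty V := Nat.card_pos_iff.mp (by omega) |>.1
  set N := stabilizer G u
  have : N.Normal :=
    Subgroup.normal_of_index_eq_two (by rw [index_stabilizer_of_transitive, hU])
  have hoff (g : G) (hg : g ∉ N) : Nat.card (fixedBy V g) ≠ 0 := by
    have := h g
    rcases card_fixedBy_eq_zero_or_two hU g with h0 | h2
    · omega
    · exact absurd ((card_fixedBy_eq_two_iff hU u g).mp h2) hg
  have hon (n : N) : Nat.card (fixedBy T n) = Nat.card (fixedBy V n) + 1 := by
    have := h n
    rw [(card_fixedBy_eq_two_iff hU u (n : G)).mpr n.2] at this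
    change Nat.card (fixedBy T (n : G)) = Nat.card (fixedBy V (n : G)) + 1
    omega
  have := isPretransitive_subgroup_of_card_fixedBy_ne_zero N hoff
  have hTN : Nat.card (orbitRel.Quotient N T) = 2 := by
    have hsumT := sum_card_fixedBy (G := N) (X := T)
    have hsumV := sum_card_fixedBy (G := N) (X := V)
    rw [card_orbits_eq_one, one_mul] at hsumV
    simp only [hon, Finset.sum_add_distrib, hsumV, Finset.sum_const, Finset.card_univ,
      smul_eq_mul, mul_one, ← Nat.card_eq_fintype_card] at hsumT
    exact Nat.eq_of_mul_eq_mul_right (Nat.card_pos (α := N)) (by omega)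
  obtain ⟨n, hn⟩ := exists_card_fixedBy_eq_zero (G := N) (X := V) (by omega)
  exact card_fixedBy_ne_one_of_normal hT N hTN n (by rw [hon, hn])

theorem not_forall_card_fixedBy_add_one_eq [Finite G] [IsPretransitive G T]
    [IsPretransitive G U] [IsPretransitive G V]
    (hT : Nat.card T ≤ 4) (hU : 2 ≤ Nat.card U) (hV : 2 ≤ Nat.card V) :
    ¬ ∀ g : G, Nat.card (fixedBy T g) + 1 = Nat.card (fixedBy U g) + Nat.card (fixedBy V g) := by
  intro h
  have hsizes := h 1
  simp only [card_fixedBy_one] at hsizes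
  by_cases hT₃ : Nat.card T = 3
  · exact not_forall_card_fixedBy_add_one_eq_three_two_two hT₃ (by omega) (by omega) h
  by_cases hU₂ : Nat.card U = 2
  · exact not_forall_card_fixedBy_add_one_eq_four_two_three (by omega) hU₂ (by omega) h
  · exact not_forall_card_fixedBy_add_one_eq_four_two_three (by omega) (by omega) (by omega)
      fun g => (h g).trans (add_comm _ _)

end SmallRelations

section Equivariant

variable {G A B : Type*} [Group G] [MulAction G A] [MulAction G B]

theorem exists_equiv_orbit_of_stabilizer_eq {x : A} {y : B}
    (h : stabilizer G x = stabilizer G y) :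
    ∃ e : SubMulAction.orbit G x ≃ SubMulAction.orbit G y, ∀ (g : G) z, e (g • z) = g • e z := by
  let e : SubMulAction.orbit G x ≃ SubMulAction.orbit G y :=
    (orbitEquivQuotientStabilizer G x).trans
      ((Subgroup.quotientEquivOfEq h).trans (orbitEquivQuotientStabilizer G y).symm)
  have he (k : G) (hk : k • x ∈ SubMulAction.orbit G x) : (e ⟨k • x, hk⟩ : B) = k • y := by
    have : orbitEquivQuotientStabilizer G x ⟨k • x, hk⟩ = k := by
      rw [← Equiv.eq_symm_apply]
      exact Subtype.ext (orbitEquivQuotientStabilizer_symm_apply G x k).symm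
    change ((orbitEquivQuotientStabilizer G y).symm (Subgroup.quotientEquivOfEq h
      (orbitEquivQuotientStabilizer G x ⟨k • x, hk⟩)) : B) = k • y
    rw [this, Subgroup.quotientEquivOfEq_mk]
    exact orbitEquivQuotientStabilizer_symm_apply G y k
  refine ⟨e, fun g ⟨_, k, rfl⟩ => Subtype.ext ?_⟩
  have hgk : g • (⟨k • x, k, rfl⟩ : SubMulAction.orbit G x) = ⟨(g * k) • x, g * k, rfl⟩ :=
    Subtype.ext (mul_smul g k x).symm
  rw [hgk, SubMulAction.val_smul]
  exact (he (g * k) _).trans ((mul_smul g k y).trans (congrArg (g • ·) (he k _).symm))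

theorem exists_equiv_of_equiv_of_equiv_compl {p : SubMulAction G A} {q : SubMulAction G B}
    (e₁ : p ≃ q) (he₁ : ∀ (g : G) x, e₁ (g • x) = g • e₁ x)
    (e₂ : ↥pᶜ ≃ ↥qᶜ) (he₂ : ∀ (g : G) x, e₂ (g • x) = g • e₂ x) :
    ∃ e : A ≃ B, ∀ (g : G) a, e (g • a) = g • e a := by
  classical
  refine ⟨(Equiv.Set.sumCompl (p : Set A)).symm.trans
    ((e₁.sumCongr e₂).trans (Equiv.Set.sumCompl (q : Set B))), fun g a => ?_⟩
  by_cases ha : a ∈ p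
  · have hga : g • a ∈ p := p.smul_mem g ha
    simp only [Equiv.trans_apply, Equiv.Set.sumCompl_symm_apply_of_mem ha,
      Equiv.Set.sumCompl_symm_apply_of_mem hga, Equiv.sumCongr_apply, Sum.map_inl]
    exact congrArg Subtype.val (he₁ g ⟨a, ha⟩)
  · have hga : g • a ∉ p := fun h => ha (by simpa using p.smul_mem g⁻¹ h)
    simp only [Equiv.trans_apply, Equiv.Set.sumCompl_symm_apply_of_notMem ha,
      Equiv.Set.sumCompl_symm_apply_of_notMem hga, Equiv.sumCongr_apply, Sum.map_inr]
    exact congrArg Subtype.val (he₂ g ⟨a, ha⟩)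

end Equivariant

namespace IsGassmannEquiv

variable {G A B : Type*} [Group G] [MulAction G A] [MulAction G B]

theorem exists_forall_smul_eq [Finite G] [Finite A] [Finite B] (h : IsGassmannEquiv G A B)
    (hA : Nat.card A ≤ 5) (x₀ : A) (hx₀ : ∀ g : G, g • x₀ = x₀) :
    ∃ y : B, ∀ g : G, g • y = y := by
  by_contra! hB
  have hcard := h.card_eq
  have hrAB := h.card_orbits_eq
  have h2r := two_mul_card_orbits_le hB
  set ω₀ : orbitRel.Quotient G A := Quotient.mk'' x₀
  have hω₀ : Nat.card ω₀.orbit = 1 := by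
    rw [orbitRel.Quotient.orbit_mk]
    exact card_orbit_eq_one hx₀
  have hfix₀ (g : G) : Nat.card (fixedBy ω₀.orbit g) = 1 := by
    have := card_fixedBy_le (X := ω₀.orbit) g
    have := card_fixedBy_add_one_ne (X := ω₀.orbit) g
    omega
  have hr : Nat.card (orbitRel.Quotient G A) = 2 := by
    have : Nonempty (orbitRel.Quotient G A) := ⟨ω₀⟩
    have := Nat.card_pos (α := orbitRel.Quotient G A)
    by_contra hne
    have := (pretransitive_iff_subsingleton_quotient G A).mpr
      (Finite.card_le_one_iff_subsingleton.mp (by omega))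
    have : Nat.card A = 1 := by
      rw [← Set.ncard_univ, ← orbit_eq_univ G x₀, ← Nat.card_coe_set_eq]
      exact card_orbit_eq_one hx₀
    omega
  obtain ⟨ω, -, hsplitA⟩ := exists_card_fixedBy_eq_add_of_card_orbits_eq_two hr ω₀
  rw [hrAB] at hr
  obtain ⟨ν₀⟩ : Nonempty (orbitRel.Quotient G B) := Nat.card_pos_iff.mp (by omega) |>.1
  obtain ⟨ν, -, hsplitB⟩ := exists_card_fixedBy_eq_add_of_card_orbits_eq_two hr ν₀
  have hω := hsplitA 1
  simp only [card_fixedBy_one, hω₀] at hω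
  refine not_forall_card_fixedBy_add_one_eq (G := G) (T := ω.orbit) (by omega)
    (one_lt_card_orbit hB ν₀) (one_lt_card_orbit hB ν) fun g => ?_
  have := h g
  rw [hsplitA, hsplitB, hfix₀] at this
  omega

theorem exists_stabilizer_eq_of_le [Finite G] [Finite A] [Finite B] (h : IsGassmannEquiv G A B)
    (hA : Nat.card A ≤ 5) (x : A) (hx : ∀ y : B, Nat.card (orbit G x) ≤ Nat.card (orbit G y)) :
    ∃ y : B, stabilizer G x = stabilizer G y := by
  obtain ⟨y, hy⟩ := (h.subgroup (stabilizer G x)).exists_forall_smul_eq hA x fun g => g.2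
  have hle : stabilizer G x ≤ stabilizer G y := fun g hg => hy ⟨g, hg⟩
  refine ⟨y, hle.eq_of_not_lt fun hlt => ?_⟩
  have := Subgroup.index_strictAnti hlt
  rw [index_stabilizer, index_stabilizer, ← Nat.card_coe_set_eq, ← Nat.card_coe_set_eq] at this
  exact absurd this (not_lt.mpr (hx y))

theorem exists_stabilizer_eq [Finite G] [Finite A] [Finite B] [Nonempty A]
    (h : IsGassmannEquiv G A B) (hA : Nat.card A ≤ 5) :
    ∃ (x : A) (y : B), stabilizer G x = stabilizer G y := by
  have : Nonempty B := (Nat.card_pos_iff.mp (h.card_eq ▸ Nat.card_pos)).1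
  obtain ⟨x, hx⟩ := Finite.exists_min fun a : A => Nat.card (orbit G a)
  obtain ⟨y, hy⟩ := Finite.exists_min fun b : B => Nat.card (orbit G b)
  rcases le_total (Nat.card (orbit G x)) (Nat.card (orbit G y)) with hxy | hyx
  · obtain ⟨y', h'⟩ := h.exists_stabilizer_eq_of_le hA x fun b => hxy.trans (hy b)
    exact ⟨x, y', h'⟩
  · obtain ⟨x', h'⟩ :=
      h.symm.exists_stabilizer_eq_of_le (h.card_eq ▸ hA) y fun a => hyx.trans (hx a)
    exact ⟨x', y, h'.symm⟩

theorem exists_equiv [Finite G] [Finite A] [Finite B] (h : IsGassmannEquiv G A B)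
    (hA : Nat.card A ≤ 5) : ∃ e : A ≃ B, ∀ (g : G) a, e (g • a) = g • e a := by
  induction hn : Nat.card A using Nat.strong_induction_on generalizing A B with
  | _ n ih =>
  rcases isEmpty_or_nonempty A with hA₀ | _
  · have : IsEmpty B := by
      rw [← Finite.card_eq_zero_iff, ← h.card_eq, Finite.card_eq_zero_iff]
      exact hA₀
    exact ⟨Equiv.equivOfIsEmpty A B, fun _ a => isEmptyElim a⟩
  obtain ⟨x, y, hxy⟩ := h.exists_stabilizer_eq hA
  obtain ⟨e₁, he₁⟩ := exists_equiv_orbit_of_stabilizer_eq hxy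
  have hlt : Nat.card ↥(SubMulAction.orbit G x)ᶜ < n := by
    have hsplit := card_fixedBy_eq_add_compl (SubMulAction.orbit G x) (1 : G)
    simp only [card_fixedBy_one] at hsplit
    have : Nonempty (SubMulAction.orbit G x) := ⟨⟨x, mem_orbit_self x⟩⟩
    have := Nat.card_pos (α := SubMulAction.orbit G x)
    omega
  obtain ⟨e₂, he₂⟩ := ih _ hlt (h.compl e₁ he₁) (by omega) rfl
  exact exists_equiv_of_equiv_of_equiv_compl e₁ he₁ e₂ he₂

end IsGassmannEquiv

theorem stmt_7_general (G : Type) [Group G] [Fintype G]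
    (A B : Type) [Fintype A] [Fintype B] [MulAction G A] [MulAction G B]
    (hA5 : Nat.card A ≤ 5)
    (h : ∀ g : G, Nat.card (MulAction.fixedBy A g) = Nat.card (MulAction.fixedBy B g)) :
    ∃ e : A ≃ B, ∀ (g : G) (a : A), e (g • a) = g • e a :=
  IsGassmannEquiv.exists_equiv h hA5

/-- Gassmann equivalent G-sets of cardinality at most 5 are isomorphic. -/
theorem stmt_7 (G : Type) [Group G] [Fintype G]
    (A B : Type) [Fintype A] [Fintype B] [MulAction G A] [MulAction G B]
    (hA5 : Nat.card A ≤ 5) (hB5 : Nat.card B ≤ 5)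
    (h : ∀ g : G, Nat.card (MulAction.fixedBy A g) = Nat.card (MulAction.fixedBy B g)) :
    ∃ e : A ≃ B, ∀ (g : G) (a : A), e (g • a) = g • e a :=
  stmt_7_general G A B hA5 h
end

section
/- Let V = F₂³ and G = GL₃(F₂) acting naturally on V. Let A be the set of 1-dimensional subspaces of V and B the set of 2-dimensional subspaces of V, each with the induced G-action. Then there is no G-equivariant bijection between A and B. -/
/-!
An equivariant bijection would send the line `𝔽₂ e₀` to a plane stable under the stabiliser of that
line, and no plane is. The stabiliser contains the map of order three fixing `e₀` and cycling the
nonzero vectors of the plane `x₀ = 0`, and the transvection `e₁ ↦ e₀ + e₁`. A plane meets `x₀ = 0`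
nontrivially, so if it is stable under the first map it contains `e₁` and `e₂`, and if also under the
second, it contains `e₀` and is everything.
-/

theorem Submodule.apply_mem_of_map_eq_self {R M : Type*} [Semiring R] [AddCommMonoid M]
    [Module R M] {g : M →ₗ[R] M} {W : Submodule R M} (hW : W.map g = W) :
    ∀ x ∈ W, g x ∈ W :=
  fun _ hx => hW ▸ Submodule.mem_map_of_mem hx

theorem Submodule.map_span_singleton_of_apply_eq {R M : Type*} [Semiring R] [AddCommMonoid M]
    [Module R M] {g : M →ₗ[R] M} {v : M} (hv : g v = v) :
    (R ∙ v).map g = R ∙ v := by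
  rw [Submodule.map_span, Set.image_singleton, hv]

theorem Submodule.exists_ne_zero_mem_ker {K V : Type*} [Field K] [AddCommGroup V] [Module K V]
    [FiniteDimensional K V] {W : Submodule K V} (hW : 1 < Module.finrank K W) (φ : V →ₗ[K] K) :
    ∃ u ∈ W, u ≠ 0 ∧ φ u = 0 := by
  have hker : LinearMap.ker (φ ∘ₗ W.subtype) ≠ ⊥ :=
    LinearMap.ker_ne_bot_of_finrank_lt (by rwa [Module.finrank_self])
  obtain ⟨⟨u, huW⟩, hu, hu0⟩ := Submodule.exists_mem_ne_zero_of_ne_bot hker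
  exact ⟨u, huW, fun h => hu0 (Subtype.ext h), hu⟩

local notation "V" => Fin 3 → ZMod 2

noncomputable def cycleEquiv : V ≃ₗ[ZMod 2] V :=
  Matrix.toLinearEquiv' !![1, 0, 0; 0, 0, 1; 0, 1, 1]
    (invertibleOfLeftInverse _ !![1, 0, 0; 0, 1, 1; 0, 1, 0] (by decide))

noncomputable def transvectionEquiv : V ≃ₗ[ZMod 2] V :=
  Matrix.toLinearEquiv' !![1, 1, 0; 0, 1, 0; 0, 0, 1]
    (invertibleOfLeftInverse _ !![1, 1, 0; 0, 1, 0; 0, 0, 1] (by decide))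

theorem cycleEquiv_apply (v : V) : cycleEquiv v = ![v 0, v 2, v 1 + v 2] := by
  change Matrix.toLin' _ v = _
  ext i; fin_cases i <;> simp [Matrix.mulVec, dotProduct, Fin.sum_univ_succ]

theorem transvectionEquiv_apply (v : V) : transvectionEquiv v = ![v 0 + v 1, v 1, v 2] := by
  change Matrix.toLin' _ v = _
  ext i; fin_cases i <;> simp [Matrix.mulVec, dotProduct, Fin.sum_univ_succ]

theorem exists_cycleEquiv_iterate_eq {u : V} (hu0 : u 0 = 0) (hu : u ≠ 0) :
    u = ![0, 1, 0] ∨ cycleEquiv u = ![0, 1, 0] ∨ cycleEquiv (cycleEquiv u) = ![0, 1, 0] := by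
  simp only [cycleEquiv_apply]
  revert u
  decide

theorem eq_top_of_map_cycleEquiv_of_map_transvectionEquiv {W : Submodule (ZMod 2) V}
    (hW : 1 < Module.finrank (ZMod 2) W)
    (hcyc : W.map (cycleEquiv : V →ₗ[ZMod 2] V) = W)
    (htr : W.map (transvectionEquiv : V →ₗ[ZMod 2] V) = W) : W = ⊤ := by
  obtain ⟨u, huW, hu, hu0⟩ := Submodule.exists_ne_zero_mem_ker hW (LinearMap.proj 0)
  have he₁ : ![0, 1, 0] ∈ W := by
    have hcyc' := Submodule.apply_mem_of_map_eq_self hcyc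
    rcases exists_cycleEquiv_iterate_eq hu0 hu with h | h | h <;> rw [← h]
    exacts [huW, hcyc' _ huW, hcyc' _ (hcyc' _ huW)]
  have he₂ : ![0, 0, 1] ∈ W := by
    have h := Submodule.apply_mem_of_map_eq_self hcyc _ he₁
    rwa [LinearEquiv.coe_coe, cycleEquiv_apply] at h
  have he₀ : ![1, 0, 0] ∈ W := by
    have h := W.sub_mem (Submodule.apply_mem_of_map_eq_self htr _ he₁) he₁
    rw [LinearEquiv.coe_coe, transvectionEquiv_apply] at h
    convert h using 1
    decide
  refine eq_top_iff.mpr fun v _ => ?_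
  have hv : v = v 0 • ![1, 0, 0] + v 1 • ![0, 1, 0] + v 2 • ![0, 0, 1] := by
    ext i; fin_cases i <;> simp
  rw [hv]
  exact W.add_mem (W.add_mem (W.smul_mem _ he₀) (W.smul_mem _ he₁)) (W.smul_mem _ he₂)

/-- For V = F₂³, there is no GL(V)-equivariant bijection between the set of
1-dimensional subspaces and the set of 2-dimensional subspaces. -/
theorem stmt_11 :
    ¬ ∃ e : {L : Submodule (ZMod 2) (Fin 3 → ZMod 2) // Module.finrank (ZMod 2) L = 1} ≃
            {W : Submodule (ZMod 2) (Fin 3 → ZMod 2) // Module.finrank (ZMod 2) W = 2},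
        ∀ (g : (Fin 3 → ZMod 2) ≃ₗ[ZMod 2] (Fin 3 → ZMod 2))
          (L L' : {L : Submodule (ZMod 2) (Fin 3 → ZMod 2) // Module.finrank (ZMod 2) L = 1}),
          Submodule.map (g : (Fin 3 → ZMod 2) →ₗ[ZMod 2] (Fin 3 → ZMod 2)) L.1 = L'.1 →
            Submodule.map (g : (Fin 3 → ZMod 2) →ₗ[ZMod 2] (Fin 3 → ZMod 2)) (e L).1 =
              (e L').1 := by
  rintro ⟨e, he⟩
  let L₀ : {L : Submodule (ZMod 2) V // Module.finrank (ZMod 2) L = 1} :=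
    ⟨ZMod 2 ∙ ![1, 0, 0], finrank_span_singleton (by decide)⟩
  have hstab : ∀ g : V ≃ₗ[ZMod 2] V, g ![1, 0, 0] = ![1, 0, 0] →
      (e L₀).1.map (g : V →ₗ[ZMod 2] V) = (e L₀).1 :=
    fun g hg => he g L₀ L₀ (Submodule.map_span_singleton_of_apply_eq hg)
  have htop : (e L₀).1 = ⊤ :=
    eq_top_of_map_cycleEquiv_of_map_transvectionEquiv (by rw [(e L₀).2]; norm_num)
      (hstab _ (by rw [cycleEquiv_apply]; decide))
      (hstab _ (by rw [transvectionEquiv_apply]; decide))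
  have hdim := (e L₀).2
  rw [htop, finrank_top, Module.finrank_fin_fun] at hdim
  omega
end
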